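/- arXiv:2405.14898 — 4 statements merged into one kernel-verified Lean document; each statement's English description precedes it below -/
import Mathlib

section
/- Let d ≥ 2 and n ≥ 2d+1. Then the minimum bisection width (rna number) of the d-th power of the cycle C_n satisfies σ⁻¹(C_n^d) ≤ d(d+1). -/
/-- A coloring `f : V → Fin 2` is balanced if its two color class sizes differ by at most 1. -/
def BalancedColoring {V : Type*} (f : V → Fin 2) : Prop :=
  (Nat.card {v | f v = 0} : ℤ) - (Nat.card {v | f v = 1} : ℤ) ≤ 1 ∧
  (Nat.card {v | f v = 1} : ℤ) - (Nat.card {v | f v = 0} : ℤ) ≤ 1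

/-- The set `g(f)` of bichromatic edges of `G` under the coloring `f`. -/
def bichromatic {V : Type*} (G : SimpleGraph V) (f : V → Fin 2) : Set (Sym2 V) :=
  {e | e ∈ G.edgeSet ∧ Sym2.lift ⟨fun a b => f a ≠ f b, fun a b => by simp [ne_comm]⟩ e}

/-- `|g(f)|`, the number of bichromatic edges. -/
noncomputable def mixedCount {V : Type*} (G : SimpleGraph V) (f : V → Fin 2) : ℕ :=
  (bichromatic G f).ncard

/-- The rna number / minimum bisection width `σ⁻¹(G)`. -/
noncomputable def rna {V : Type*} (G : SimpleGraph V) : ℕ :=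
  sInf {k | ∃ f : V → Fin 2, BalancedColoring f ∧ mixedCount G f = k}

/-- The `d`-th power of the cycle `C_n`, with vertex set `ZMod n`. -/
def cyclePow (n d : ℕ) : SimpleGraph (ZMod n) where
  Adj u v := u ≠ v ∧ ∃ j : ℕ, 1 ≤ j ∧ j ≤ d ∧ (v = u + (j : ZMod n) ∨ u = v + (j : ZMod n))
  symm := by
    constructor
    rintro u v ⟨h, j, h1, h2, h3⟩
    exact ⟨h.symm, j, h1, h2, h3.symm⟩
  loopless := by constructor; rintro u ⟨h, -⟩; exact h rfl

/-!
Colour the vertices `0, …, ⌊n/2⌋ - 1` of `C_n^d` with `0` and the others with `1`; this is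
balanced. An edge `{u, u + j}` with `j ≤ d` is bichromatic only if it straddles one of the two
cut points `0` and `⌊n/2⌋`, and the edges straddling a cut point `c` are among the
`{c - j + i, c + i}` with `0 ≤ i < j ≤ d`, of which there are `d(d+1)/2`.
-/

open Finset

theorem rna_le_mixedCount {V : Type*} (G : SimpleGraph V) {f : V → Fin 2}
    (hf : BalancedColoring f) : rna G ≤ mixedCount G f :=
  Nat.sInf_le ⟨f, hf, rfl⟩

section IntervalCut

variable {n : ℕ}

def intervalColoring (m : ℕ) (v : ZMod n) : Fin 2 := if v.val < m then 0 else 1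

theorem ZMod.ncard_setOf_val_lt [NeZero n] (m : ℕ) :
    {v : ZMod n | v.val < m}.ncard = min n m := by
  obtain ⟨k, rfl⟩ := Nat.exists_eq_add_one_of_ne_zero (NeZero.ne n)
  rw [← Nat.card_coe_set_eq, Nat.card_eq_card_toFinset, Set.toFinset_ofPred]
  exact Fin.card_filter_val_lt

theorem balancedColoring_intervalColoring [NeZero n] :
    BalancedColoring (intervalColoring (n := n) (n / 2)) := by
  have hlow : {v : ZMod n | intervalColoring (n / 2) v = 0} = {v | v.val < n / 2} := by
    ext v; by_cases h : v.val < n / 2 <;> simp [intervalColoring, h]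
  have hhigh : {v : ZMod n | intervalColoring (n / 2) v = 1} = {v | v.val < n / 2}ᶜ := by
    ext v; by_cases h : v.val < n / 2 <;> simp [intervalColoring, h, not_lt.mp]
  have hcard := Set.ncard_add_ncard_compl {v : ZMod n | v.val < n / 2}
  rw [ZMod.ncard_setOf_val_lt, Nat.card_zmod, min_eq_right (Nat.div_le_self n 2)] at hcard
  unfold BalancedColoring
  simp only [Nat.card_coe_set_eq, hlow, hhigh, ZMod.ncard_setOf_val_lt,
    min_eq_right (Nat.div_le_self n 2)]
  omega

def crossingEdges (d : ℕ) (c : ZMod n) : Finset (Sym2 (ZMod n)) :=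
  ((range (d + 1)).sigma range).image fun p => s(c - p.1 + p.2, c + p.2)

theorem two_mul_card_crossingEdges_le (d : ℕ) (c : ZMod n) :
    2 * #(crossingEdges d c) ≤ d * (d + 1) := by
  calc 2 * #(crossingEdges d c) ≤ 2 * #((range (d + 1)).sigma range) :=
        Nat.mul_le_mul_left 2 card_image_le
    _ = d * (d + 1) := by
        rw [card_sigma, mul_comm]
        simpa [mul_comm] using sum_range_id_mul_two (d + 1)

theorem mem_crossingEdges_of_intervalColoring_ne {m d j : ℕ} {u : ZMod n} (hjn : j < n)
    (hjd : j ≤ d) (h : intervalColoring m u ≠ intervalColoring m (u + (j : ZMod n))) :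
    s(u, u + (j : ZMod n)) ∈ crossingEdges d 0 ∪ crossingEdges d m := by
  have : NeZero n := ⟨by omega⟩
  have hu : ((u.val : ℕ) : ZMod n) = u := ZMod.natCast_zmod_val u
  rw [mem_union, crossingEdges, crossingEdges, mem_image, mem_image]
  by_cases hwrap : u.val + j < n
  · have hj : (j : ZMod n).val = j := ZMod.val_cast_of_lt hjn
    have hval : (u + j).val = u.val + j := by rw [ZMod.val_add_of_lt (by rwa [hj]), hj]
    have hcross : u.val < m ∧ m ≤ u.val + j := by
      by_contra hc
      apply h
      by_cases hm : u.val < m <;> simp [intervalColoring, hval, hm] <;> omega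
    refine Or.inr ⟨⟨j, u.val + j - m⟩, by simp only [mem_sigma, mem_range]; omega, ?_⟩
    simp only [Nat.cast_sub hcross.2, Nat.cast_add, hu]
    ring_nf
  · have hun := u.val_lt
    refine Or.inl ⟨⟨j, u.val + j - n⟩, by simp only [mem_sigma, mem_range]; omega, ?_⟩
    simp only [Nat.cast_sub (not_lt.mp hwrap), Nat.cast_add, hu, ZMod.natCast_self]
    ring_nf

theorem bichromatic_cyclePow_subset {d m : ℕ} (hdn : d < n) :
    bichromatic (cyclePow n d) (intervalColoring m) ⊆
      ↑(crossingEdges d 0 ∪ crossingEdges d (m : ZMod n)) := by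
  rintro e ⟨he, hmixed⟩
  induction e using Sym2.ind with
  | _ u v =>
    rw [SimpleGraph.mem_edgeSet] at he
    rw [Sym2.lift_mk] at hmixed
    obtain ⟨-, j, -, hjd, rfl | rfl⟩ := he
    · exact mem_crossingEdges_of_intervalColoring_ne (by omega) hjd hmixed
    · rw [Sym2.eq_swap]
      exact mem_crossingEdges_of_intervalColoring_ne (by omega) hjd (Ne.symm hmixed)

theorem mixedCount_cyclePow_intervalColoring_le {d : ℕ} (m : ℕ) (hdn : d < n) :
    mixedCount (cyclePow n d) (intervalColoring m) ≤ d * (d + 1) := by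
  have hsub := Set.ncard_le_ncard (bichromatic_cyclePow_subset (m := m) hdn) (finite_toSet _)
  have hunion := card_union_le (crossingEdges d 0) (crossingEdges d (m : ZMod n))
  have h0 := two_mul_card_crossingEdges_le d (0 : ZMod n)
  have hm := two_mul_card_crossingEdges_le d (m : ZMod n)
  rw [Set.ncard_coe_finset] at hsub
  rw [mixedCount]
  omega

end IntervalCut

theorem stmt2_general (d n : ℕ) (hn : 2 * d + 1 ≤ n) :
    rna (cyclePow n d) ≤ d * (d + 1) := by
  have : NeZero n := ⟨by omega⟩
  calc rna (cyclePow n d) ≤ mixedCount (cyclePow n d) (intervalColoring (n / 2)) :=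
        rna_le_mixedCount _ balancedColoring_intervalColoring
    _ ≤ d * (d + 1) := mixedCount_cyclePow_intervalColoring_le _ (by omega)

theorem stmt2 (d n : ℕ) (hd : 2 ≤ d) (hn : 2 * d + 1 ≤ n) :
    rna (cyclePow n d) ≤ d * (d + 1) :=
  stmt2_general d n hn
end

section
/- Let d ≥ 2 and n > 2d+1. Deleting a vertex v_0 from C_n^d and adding the edges (v_i, v_{i+d+1 mod n}) for i ∈ {n−d, …, n−1} yields a graph isomorphic to C_{n−1}^d. -/
/-- The extra edge set `S = {(v_i, v_{i+d+1}) : n-d ≤ i ≤ n-1}`. -/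
def Sset (n d : ℕ) : Set (Sym2 (ZMod n)) :=
  {e | ∃ i : ℕ, n - d ≤ i ∧ i ≤ n - 1 ∧ e = s((i : ZMod n), (i : ZMod n) + (d + 1))}

/-- The graph `H = C_n^d - v_0 + S`. -/
def Hgraph (n d : ℕ) : SimpleGraph {v : ZMod n // v ≠ 0} :=
  SimpleGraph.comap Subtype.val ((cyclePow n d) ⊔ SimpleGraph.fromEdgeSet (Sset n d))

/-!
Send `v_i` to the vertex `i - 1` of `C_{n-1}^d`. For `1 ≤ a, b ≤ n - 1`, the vertices
`v_a, v_b` are adjacent in `C_n^d` iff `0 < |a - b| ≤ d` or `|a - b| ≥ n - d`, and the edges of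
`S` are exactly the pairs with `|a - b| = n - d - 1`. So in `H` adjacency means
`0 < |a - b| ≤ d` or `|a - b| ≥ (n - 1) - d`, which is adjacency of `a - 1, b - 1` in
`C_{n-1}^d`.
-/

theorem ZMod.natCast_eq_natCast_iff_of_lt {m a b : ℕ} (ha : a < m) (hb : b < 2 * m) :
    (a : ZMod m) = b ↔ a = b ∨ a + m = b := by
  rw [ZMod.natCast_eq_natCast_iff', Nat.mod_eq_of_lt ha]
  rcases lt_or_ge b m with hbm | hbm
  · rw [Nat.mod_eq_of_lt hbm]; omega
  · rw [Nat.mod_eq_sub_mod hbm, Nat.mod_eq_of_lt (by omega)]; omega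

theorem cyclePow_adj_natCast {m d a b : ℕ} (hdm : d < m) (ha : a < m) (hb : b < m) :
    (cyclePow m d).Adj a b ↔
      a ≠ b ∧ (b ≤ a + d ∧ a ≤ b + d ∨ a + m ≤ b + d ∨ b + m ≤ a + d) := by
  have cast_eq_add {x y : ℕ} (hx : x < m) (hy : y < m) {j : ℕ} (hj : j ≤ d) :
      (x : ZMod m) = y + j ↔ x = y + j ∨ x + m = y + j := by
    rw [← Nat.cast_add, ZMod.natCast_eq_natCast_iff_of_lt hx (by omega)]
  simp only [cyclePow, ne_eq, ZMod.natCast_eq_natCast_iff_of_lt ha (by omega : b < 2 * m)]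
  constructor
  · rintro ⟨hab, j, hj1, hjd, h | h⟩
    · rw [cast_eq_add hb ha hjd] at h; omega
    · rw [cast_eq_add ha hb hjd] at h; omega
  · rintro ⟨hab, h⟩
    refine ⟨by omega, ?_⟩
    rcases le_total a b with hle | hle
    · by_cases hd : b ≤ a + d
      · exact ⟨b - a, by omega, by omega, .inl ((cast_eq_add hb ha (by omega)).2 (by omega))⟩
      · exact ⟨a + m - b, by omega, by omega,
          .inr ((cast_eq_add ha hb (by omega)).2 (by omega))⟩
    · by_cases hd : a ≤ b + d
      · exact ⟨a - b, by omega, by omega, .inr ((cast_eq_add ha hb (by omega)).2 (by omega))⟩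
      · exact ⟨b + m - a, by omega, by omega,
          .inl ((cast_eq_add hb ha (by omega)).2 (by omega))⟩

theorem mem_sset_natCast {n d a b : ℕ} (hdn : d < n) (ha : a < n) (hb : b < n) :
    s((a : ZMod n), (b : ZMod n)) ∈ Sset n d ↔
      (n ≤ a + d ∧ a + d + 1 = b + n) ∨ (n ≤ b + d ∧ b + d + 1 = a + n) := by
  have cast_eq_add {x i : ℕ} (hx : x < n) (hi : i < n) :
      (x : ZMod n) = i + (d + 1) ↔ x = i + d + 1 ∨ x + n = i + d + 1 := by
    rw [← Nat.cast_one, ← Nat.cast_add, ← Nat.cast_add,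
      ZMod.natCast_eq_natCast_iff_of_lt hx (by omega), add_assoc]
  have cast_eq {x i : ℕ} (hx : x < n) (hi : i < n) : (x : ZMod n) = i ↔ x = i := by
    rw [ZMod.natCast_eq_natCast_iff_of_lt hx (by omega)]; omega
  constructor
  · rintro ⟨i, hi1, hi2, h⟩
    rw [Sym2.eq_iff, cast_eq ha (by omega), cast_eq hb (by omega), cast_eq_add ha (by omega),
      cast_eq_add hb (by omega)] at h
    omega
  · rintro (⟨h1, h2⟩ | ⟨h1, h2⟩)
    · refine ⟨a, by omega, by omega, Sym2.eq_iff.2 (.inl ⟨rfl, ?_⟩)⟩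
      rw [cast_eq_add hb ha]; omega
    · refine ⟨b, by omega, by omega, Sym2.eq_iff.2 (.inr ⟨?_, rfl⟩)⟩
      rw [cast_eq_add ha hb]; omega

-- `ZMod (k + 1)` is `Fin (k + 1)` by definition, and this is `i ↦ i + 1`.
def succNeZero (k : ℕ) : ZMod (k + 1) ≃ {v : ZMod (k + 2) // v ≠ 0} :=
  finSuccAboveEquiv 0

theorem succNeZero_val (k : ℕ) (i : ZMod (k + 1)) :
    (succNeZero k i : ZMod (k + 2)).val = i.val + 1 :=
  Fin.val_succ i

theorem succNeZero_natCast {k a : ℕ} (ha : a < k + 1) :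
    (succNeZero k a : ZMod (k + 2)) = ((a + 1 : ℕ) : ZMod (k + 2)) := by
  apply ZMod.val_injective
  rw [succNeZero_val, ZMod.val_natCast_of_lt ha, ZMod.val_natCast_of_lt (by omega)]

theorem hgraph_adj_succNeZero {k d : ℕ} (hdk : d < k + 1) (i j : ZMod (k + 1)) :
    (Hgraph (k + 2) d).Adj (succNeZero k i) (succNeZero k j) ↔ (cyclePow (k + 1) d).Adj i j := by
  obtain ⟨a, ha, rfl⟩ : ∃ a < k + 1, (a : ZMod (k + 1)) = i :=
    ⟨i.val, i.val_lt, i.natCast_zmod_val⟩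
  obtain ⟨b, hb, rfl⟩ : ∃ b < k + 1, (b : ZMod (k + 1)) = j :=
    ⟨j.val, j.val_lt, j.natCast_zmod_val⟩
  have hdk' : d < k + 2 := by omega
  have ha' : a + 1 < k + 2 := by omega
  have hb' : b + 1 < k + 2 := by omega
  simp only [Hgraph, SimpleGraph.comap_adj, SimpleGraph.sup_adj, SimpleGraph.fromEdgeSet_adj,
    succNeZero_natCast ha, succNeZero_natCast hb, cyclePow_adj_natCast hdk ha hb,
    cyclePow_adj_natCast hdk' ha' hb', mem_sset_natCast hdk' ha' hb', ne_eq,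
    ZMod.natCast_eq_natCast_iff_of_lt ha' (by omega : b + 1 < 2 * (k + 2))]
  omega

theorem stmt6_general (d n : ℕ) (hn : 2 * d + 1 < n) :
    Nonempty (Hgraph n d ≃g cyclePow (n - 1) d) := by
  obtain ⟨k, rfl⟩ : ∃ k, n = k + 2 := ⟨n - 2, by omega⟩
  let e : cyclePow (k + 1) d ≃g Hgraph (k + 2) d :=
    ⟨succNeZero k, hgraph_adj_succNeZero (by omega) _ _⟩
  exact ⟨e.symm⟩

theorem stmt6 (d n : ℕ) (hd : 2 ≤ d) (hn : 2 * d + 1 < n) :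
    Nonempty (Hgraph n d ≃g cyclePow (n - 1) d) :=
  stmt6_general d n hn
end

section
/- Let d ≥ 2 and n > 2d+1, and let f be a balanced coloring of G = C_n^d with |f⁻¹(1)| ≥ |f⁻¹(2)| and f(v_0) = 1. Let H be the graph obtained from G by deleting v_0 and adding the edge set S = {(v_i, v_{i+d+1 mod n}) : n−d ≤ i ≤ n−1}, and let f' be the restriction of f to V(H). Then f' is a balanced coloring of H and |g(f')| ≤ |g(f)|. -/
/-!
Removing `v₀`, which has the majority colour, keeps the colouring balanced. For the edge
count, inject the bichromatic edges of `H` into those of `C_n^d`: an old edge goes to itself,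
and a new edge `e ∈ S` goes to `s(v₀, x)`, where `x` is an endpoint of `e` coloured
differently from `v₀`. This is an edge of `C_n^d` because both endpoints of `e` are adjacent
to `v₀`, and the map is injective because the edges of `S` are pairwise disjoint and old
edges avoid `v₀`.
-/
section Coloring

variable {V : Type*}

lemma natCard_setOf_subtype_ne (p : V → Prop) (v : V) :
    Nat.card {w : {w // w ≠ v} | p w} = ({x | p x} \ {v}).ncard := by
  rw [Nat.card_coe_set_eq, ← Set.ncard_image_of_injective _ Subtype.val_injective]
  congr 1
  ext x
  simp [and_comm]

theorem BalancedColoring.comp_subtype_ne [Finite V] {f : V → Fin 2} (hf : BalancedColoring f)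
    (hmaj : Nat.card {x | f x = 1} ≤ Nat.card {x | f x = 0}) {v : V} (hv : f v = 0) :
    BalancedColoring (fun w : {w // w ≠ v} => f w) := by
  have h0 : Nat.card {w : {w // w ≠ v} | f w = 0} = Nat.card {x | f x = 0} - 1 := by
    rw [natCard_setOf_subtype_ne (f · = 0),
      Set.ncard_sdiff_singleton_of_mem (s := {x | f x = 0}) hv, Nat.card_coe_set_eq]
  have h1 : Nat.card {w : {w // w ≠ v} | f w = 1} = Nat.card {x | f x = 1} := by
    rw [natCard_setOf_subtype_ne (f · = 1), Set.sdiff_singleton_eq_self (by simp [hv]),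
      Nat.card_coe_set_eq]
  have hpos : 0 < Nat.card {x | f x = 0} := by
    rw [Nat.card_coe_set_eq]
    exact (Set.ncard_pos).mpr ⟨v, hv⟩
  simp only [BalancedColoring] at hf ⊢
  omega

lemma exists_mem_ne_of_mem_bichromatic {G : SimpleGraph V} {f : V → Fin 2} {e : Sym2 V}
    (he : e ∈ bichromatic G f) (c : Fin 2) : ∃ x ∈ e, f x ≠ c := by
  induction e using Sym2.ind with
  | _ a b =>
    by_cases ha : f a = c
    · exact ⟨b, Sym2.mem_mk_right a b, fun hb => he.2 (ha.trans hb.symm)⟩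
    · exact ⟨a, Sym2.mem_mk_left a b, ha⟩

lemma mixedCount_comap_subtype_ne_le [Finite V] (K : SimpleGraph V) (v : V) (f : V → Fin 2) :
    mixedCount (K.comap (Subtype.val : {w // w ≠ v} → V)) (f ∘ Subtype.val) ≤
      {e ∈ bichromatic K f | v ∉ e}.ncard := by
  refine Set.ncard_le_ncard_of_injOn (Sym2.map Subtype.val) ?_
    (Sym2.map.injective Subtype.val_injective).injOn
  rintro e ⟨he, hbi⟩
  induction e using Sym2.ind with
  | _ a b =>
    refine ⟨⟨he, hbi⟩, ?_⟩
    simp [a.2.symm, b.2.symm]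

theorem ncard_bichromatic_sup_fromEdgeSet_le [Finite V] (G : SimpleGraph V) (v : V)
    (S : Set (Sym2 V)) (hS_adj : ∀ e ∈ S, ∀ x ∈ e, G.Adj v x)
    (hS_disj : ∀ e₁ ∈ S, ∀ e₂ ∈ S, ∀ x ∈ e₁, x ∈ e₂ → e₁ = e₂) (f : V → Fin 2) :
    {e ∈ bichromatic (G ⊔ SimpleGraph.fromEdgeSet S) f | v ∉ e}.ncard ≤ mixedCount G f := by
  classical
  set B := {e ∈ bichromatic (G ⊔ SimpleGraph.fromEdgeSet S) f | v ∉ e}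
  have : Nonempty V := ⟨v⟩
  have hB : ∀ e ∈ B, ∃ x ∈ e, f x ≠ f v := fun e he =>
    exists_mem_ne_of_mem_bichromatic he.1 (f v)
  choose! p hp_mem hp_ne using hB
  have mem_S : ∀ e ∈ B, e ∉ G.edgeSet → e ∈ S := by
    rintro e ⟨⟨he, -⟩, -⟩ hG
    rw [SimpleGraph.edgeSet_sup, SimpleGraph.edgeSet_fromEdgeSet] at he
    exact (he.resolve_left hG).1
  refine Set.ncard_le_ncard_of_injOn (fun e => if e ∈ G.edgeSet then e else s(v, p e))
    ?_ ?_
  · intro e he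
    by_cases hG : e ∈ G.edgeSet
    · simpa only [hG, if_true] using ⟨hG, he.1.2⟩
    · simp only [hG, if_false]
      exact ⟨hS_adj e (mem_S e he hG) (p e) (hp_mem e he), (hp_ne e he).symm⟩
  · intro e₁ he₁ e₂ he₂ h
    by_cases hG₁ : e₁ ∈ G.edgeSet <;> by_cases hG₂ : e₂ ∈ G.edgeSet <;>
      simp only [hG₁, hG₂, if_true, if_false] at h
    · exact h
    · exact absurd (h ▸ Sym2.mem_mk_left v _) he₁.2
    · exact absurd (h ▸ Sym2.mem_mk_left v _) he₂.2
    · rw [Sym2.congr_right] at h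
      exact hS_disj e₁ (mem_S e₁ he₁ hG₁) e₂ (mem_S e₂ he₂ hG₂) (p e₁) (hp_mem e₁ he₁)
        (h ▸ hp_mem e₂ he₂)

end Coloring

lemma ZMod.natCast_inj_of_lt {a b n : ℕ} (ha : a < n) (hb : b < n) :
    (a : ZMod n) = b ↔ a = b := by
  rw [ZMod.natCast_eq_natCast_iff', Nat.mod_eq_of_lt ha, Nat.mod_eq_of_lt hb]

section Sset

variable {n d : ℕ}

lemma exists_eq_of_mem_Sset (hn : d < n) {e : Sym2 (ZMod n)} (he : e ∈ Sset n d) :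
    ∃ k, 1 ≤ k ∧ k ≤ d ∧ e = s(((n - k : ℕ) : ZMod n), ((d + 1 - k : ℕ) : ZMod n)) := by
  obtain ⟨i, hi₁, hi₂, rfl⟩ := he
  refine ⟨n - i, by omega, by omega, ?_⟩
  have h₁ : n - (n - i) = i := by omega
  have h₂ : d + 1 - (n - i) + n = i + (d + 1) := by omega
  rw [h₁, ← add_zero ((d + 1 - (n - i) : ℕ) : ZMod n), ← ZMod.natCast_self n, ← Nat.cast_add,
    h₂]
  push_cast
  rfl

lemma cyclePow_adj_zero_of_mem_Sset (hn : d < n) {e : Sym2 (ZMod n)} (he : e ∈ Sset n d)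
    {x : ZMod n} (hx : x ∈ e) : (cyclePow n d).Adj 0 x := by
  obtain ⟨k, hk, hkd, rfl⟩ := exists_eq_of_mem_Sset hn he
  rcases Sym2.mem_iff.mp hx with rfl | rfl
  · refine ⟨?_, k, hk, hkd, Or.inr ?_⟩
    · rw [ne_comm, ← Nat.cast_zero, Ne, ZMod.natCast_inj_of_lt (by omega) (by omega)]
      omega
    · rw [← Nat.cast_add, Nat.sub_add_cancel (by omega), ZMod.natCast_self]
  · refine ⟨?_, d + 1 - k, by omega, by omega, Or.inl (zero_add _).symm⟩
    rw [ne_comm, ← Nat.cast_zero, Ne, ZMod.natCast_inj_of_lt (by omega) (by omega)]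
    omega

lemma Sset_eq_of_mem_of_mem (hn : 2 * d < n) {e₁ e₂ : Sym2 (ZMod n)} (he₁ : e₁ ∈ Sset n d)
    (he₂ : e₂ ∈ Sset n d) {x : ZMod n} (hx₁ : x ∈ e₁) (hx₂ : x ∈ e₂) : e₁ = e₂ := by
  obtain ⟨k₁, hk₁, hkd₁, rfl⟩ := exists_eq_of_mem_Sset (by omega) he₁
  obtain ⟨k₂, hk₂, hkd₂, rfl⟩ := exists_eq_of_mem_Sset (by omega) he₂
  suffices k₁ = k₂ by rw [this]
  rcases Sym2.mem_iff.mp hx₁ with rfl | rfl <;> rcases Sym2.mem_iff.mp hx₂ with h | h <;>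
    rw [ZMod.natCast_inj_of_lt (by omega) (by omega)] at h <;> omega

end Sset

theorem stmt7_general (d n : ℕ) (hn : 2 * d + 1 < n)
    (f : ZMod n → Fin 2) (hf : BalancedColoring f)
    (hmaj : Nat.card {v | f v = 1} ≤ Nat.card {v | f v = 0})
    (h0 : f 0 = 0) :
    BalancedColoring (fun v : {v : ZMod n // v ≠ 0} => f v.val) ∧
      mixedCount (Hgraph n d) (fun v => f v.val) ≤ mixedCount (cyclePow n d) f := by
  have : NeZero n := ⟨by omega⟩
  refine ⟨hf.comp_subtype_ne hmaj h0, (mixedCount_comap_subtype_ne_le _ 0 f).trans ?_⟩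
  exact ncard_bichromatic_sup_fromEdgeSet_le _ 0 _
    (fun _ he _ hx => cyclePow_adj_zero_of_mem_Sset (by omega) he hx)
    (fun _ he₁ _ he₂ _ hx₁ hx₂ => Sset_eq_of_mem_of_mem (by omega) he₁ he₂ hx₁ hx₂) f

theorem stmt7 (d n : ℕ) (hd : 2 ≤ d) (hn : 2 * d + 1 < n)
    (f : ZMod n → Fin 2) (hf : BalancedColoring f)
    (hmaj : Nat.card {v | f v = 1} ≤ Nat.card {v | f v = 0})
    (h0 : f 0 = 0) :
    BalancedColoring (fun v : {v : ZMod n // v ≠ 0} => f v.val) ∧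
      mixedCount (Hgraph n d) (fun v => f v.val) ≤ mixedCount (cyclePow n d) f :=
  stmt7_general d n hn f hf hmaj h0
end

section
/- For d ≥ 2 and n > 2d+1, if σ⁻¹(C_{n−1}^d) ≥ d(d+1), then σ⁻¹(C_n^d) ≥ d(d+1). -/
/-!
Delete a vertex `u` of `C_{m+1}^d`: the remaining path `u+1, …, u+m` is the vertex set of
`C_m^d` via `cycleSkip u`. If `u` lies in a largest colour class of a balanced colouring `f`,
the restriction of `f` is still balanced. Every edge of `C_m^d` survives in `C_{m+1}^d` except
the edges of length `d` across the gap at `u`; both ends of such a lost edge are adjacent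
to `u`, and for `m > 2d` every vertex lies on at most one of them. Sending a bichromatic lost
edge `xy`, with `x` coloured like `u`, to the bichromatic edge `uy` therefore injects the cut
of the restriction into the cut of `f`, whence `σ⁻¹(C_m^d) ≤ σ⁻¹(C_{m+1}^d)`.
-/

open Function

lemma mk_mem_bichromatic_iff {V : Type*} {G : SimpleGraph V} {f : V → Fin 2} {x y : V} :
    s(x, y) ∈ bichromatic G f ↔ G.Adj x y ∧ f x ≠ f y := by
  simp [bichromatic]

lemma exists_balancedColoring (V : Type*) [Finite V] : ∃ f : V → Fin 2, BalancedColoring f := by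
  classical
  have := Fintype.ofFinite V
  obtain ⟨t, -, ht⟩ := Finset.exists_subset_card_eq
    (s := (Finset.univ : Finset V)) (n := Fintype.card V / 2) (by simp; omega)
  refine ⟨fun v => if v ∈ t then 1 else 0, ?_⟩
  have h1 : {v | (if v ∈ t then 1 else 0 : Fin 2) = 1} = ↑t := by
    ext v; by_cases hv : v ∈ t <;> simp [hv]
  have h0 : {v | (if v ∈ t then 1 else 0 : Fin 2) = 0} = ↑tᶜ := by
    ext v; by_cases hv : v ∈ t <;> simp [hv]
  simp only [BalancedColoring, h0, h1, Nat.card_coe_set_eq, Set.ncard_coe_finset,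
    Finset.card_compl, ht]
  omega

lemma exists_majority_vertex {V : Type*} [Nonempty V] (f : V → Fin 2) :
    ∃ w, ∀ c, Nat.card {v | f v = c} ≤ Nat.card {v | f v = f w} := by
  obtain ⟨v⟩ := ‹Nonempty V›
  by_cases hv : ∀ c, Nat.card {x | f x = c} ≤ Nat.card {x | f x = f v}
  · exact ⟨v, hv⟩
  obtain ⟨c, hc⟩ := not_forall.mp hv
  replace hc := lt_of_not_ge hc
  have hcv : c ≠ f v := by rintro rfl; exact lt_irrefl _ hc
  obtain ⟨⟨w, hw : f w = c⟩, -⟩ := Nat.card_pos_iff.mp (hc.trans_le' (Nat.zero_le _))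
  refine ⟨w, fun c' => ?_⟩
  rw [hw]
  obtain rfl | rfl : c' = f v ∨ c' = c := by omega
  exacts [hc.le, le_rfl]

lemma BalancedColoring.comp_of_majority {V W : Type*} [Finite V] {f : V → Fin 2}
    (hf : BalancedColoring f) {ι : W → V} (hι : Injective ι) {w : V}
    (hrange : Set.range ι = {w}ᶜ)
    (hmaj : ∀ c, Nat.card {v | f v = c} ≤ Nat.card {v | f v = f w}) :
    BalancedColoring (f ∘ ι) := by
  have hcard (c : Fin 2) :
      Nat.card {x | (f ∘ ι) x = c} + (if f w = c then 1 else 0) = Nat.card {v | f v = c} := by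
    have hpre : {x | (f ∘ ι) x = c} = ι ⁻¹' ({v | f v = c} \ {w}) := by
      ext x
      have : ι x ≠ w := by simpa [hrange] using Set.mem_range_self (f := ι) x
      simp [this]
    rw [Nat.card_coe_set_eq, Nat.card_coe_set_eq, hpre,
      Set.ncard_preimage_of_injective_subset_range hι (hrange ▸ Set.sdiff_subset_compl _ _)]
    split_ifs with hc
    · exact Set.ncard_sdiff_singleton_add_one hc
    · rw [Set.sdiff_singleton_eq_self (s := {v | f v = c}) hc, add_zero]
  have h0 := hcard 0
  have h1 := hcard 1
  have hm0 := hmaj 0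
  have hm1 := hmaj 1
  obtain ⟨h01, h10⟩ := hf
  obtain hw | hw : f w = 0 ∨ f w = 1 := by omega
  all_goals
    simp only [hw, if_true, if_false, Fin.reduceEq] at h0 h1 hm0 hm1
    constructor <;> omega

lemma rna_le_rna_of_forall_balanced {V W : Type*} [Finite V] {G : SimpleGraph V}
    {H : SimpleGraph W}
    (h : ∀ f : V → Fin 2, BalancedColoring f →
      ∃ g : W → Fin 2, BalancedColoring g ∧ mixedCount H g ≤ mixedCount G f) :
    rna H ≤ rna G := by
  obtain ⟨f₀, hf₀⟩ := exists_balancedColoring V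
  obtain ⟨f, hf, hfG⟩ : rna G ∈ {k | ∃ f : V → Fin 2, BalancedColoring f ∧ mixedCount G f = k} :=
    Nat.sInf_mem ⟨_, f₀, hf₀, rfl⟩
  obtain ⟨g, hg, hgf⟩ := h f hf
  calc rna H ≤ mixedCount H g := Nat.sInf_le ⟨g, hg, rfl⟩
    _ ≤ mixedCount G f := hgf
    _ = rna G := hfG

section Reroute

variable {V W : Type*} {G : SimpleGraph V} {H : SimpleGraph W} {ι : W → V} {w : V}

lemma exists_eq_mk_of_mem_bichromatic_comp {f : V → Fin 2} {e : Sym2 W}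
    (he : e ∈ bichromatic H (f ∘ ι)) (hlost : e.map ι ∉ G.edgeSet) :
    ∃ x y, e = s(x, y) ∧ f (ι x) = f w ∧ f (ι y) ≠ f w ∧ H.Adj x y ∧ ¬ G.Adj (ι x) (ι y) := by
  induction e using Sym2.ind with
  | _ x y =>
    rw [mk_mem_bichromatic_iff] at he
    rw [Sym2.map_mk, SimpleGraph.mem_edgeSet] at hlost
    obtain ⟨hxy, hf⟩ := he
    simp only [comp_apply] at hf
    by_cases hx : f (ι x) = f w
    · exact ⟨x, y, rfl, hx, hx ▸ hf.symm, hxy, hlost⟩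
    · exact ⟨y, x, Sym2.eq_swap, by omega, hx, hxy.symm, fun h => hlost h.symm⟩

lemma mixedCount_comp_le_of_reroute [Finite V] (hι : Injective ι) (hw : ∀ x, ι x ≠ w)
    (hreroute : ∀ x y, H.Adj x y → ¬ G.Adj (ι x) (ι y) → G.Adj w (ι x))
    (hmatch : ∀ x y y', H.Adj x y → ¬ G.Adj (ι x) (ι y) →
      H.Adj x y' → ¬ G.Adj (ι x) (ι y') → y = y')
    (f : V → Fin 2) : mixedCount H (f ∘ ι) ≤ mixedCount G f := by
  classical
  let κ : W → V := fun x => if f (ι x) = f w then w else ι x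
  let Φ : Sym2 W → Sym2 V := fun e => if e.map ι ∈ G.edgeSet then e.map ι else e.map κ
  have hΦlost {e} (he : e ∈ bichromatic H (f ∘ ι)) (hlost : e.map ι ∉ G.edgeSet) :
      ∃ x y, e = s(x, y) ∧ f (ι y) ≠ f w ∧ H.Adj y x ∧ ¬ G.Adj (ι y) (ι x) ∧
        Φ e = s(w, ι y) := by
    obtain ⟨x, y, rfl, hx, hy, hxy, hnxy⟩ := exists_eq_mk_of_mem_bichromatic_comp (w := w) he hlost
    refine ⟨x, y, rfl, hy, hxy.symm, fun h => hnxy h.symm, ?_⟩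
    simp [Φ, κ, if_neg hlost, hx, hy]
  refine Set.ncard_le_ncard_of_injOn Φ ?_ ?_ (Set.toFinite _)
  · intro e he
    by_cases hkept : e.map ι ∈ G.edgeSet
    · induction e using Sym2.ind with
      | _ x y =>
        rw [mk_mem_bichromatic_iff] at he
        simpa [Φ, if_pos hkept, mk_mem_bichromatic_iff] using ⟨hkept, he.2⟩
    · obtain ⟨x, y, rfl, hy, hyx, hnyx, hΦ⟩ := hΦlost he hkept
      rw [hΦ, mk_mem_bichromatic_iff]
      exact ⟨hreroute y x hyx hnyx, hy.symm⟩
  · have hkept_of {e} (hkept : e.map ι ∈ G.edgeSet) : Φ e = e.map ι := if_pos hkept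
    have hw_notMem {e : Sym2 W} : w ∉ e.map ι := by
      simp only [Sym2.mem_map, not_exists, not_and]
      exact fun x _ => hw x
    intro e₁ he₁ e₂ he₂ heq
    by_cases h₁ : e₁.map ι ∈ G.edgeSet <;> by_cases h₂ : e₂.map ι ∈ G.edgeSet
    · rw [hkept_of h₁, hkept_of h₂] at heq
      exact Sym2.map.injective hι heq
    · obtain ⟨_, _, -, -, -, -, hΦ⟩ := hΦlost he₂ h₂
      exact absurd (heq ▸ hΦ ▸ Sym2.mem_mk_left _ _) (hkept_of h₁ ▸ hw_notMem)
    · obtain ⟨_, _, -, -, -, -, hΦ⟩ := hΦlost he₁ h₁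
      exact absurd (heq ▸ hΦ ▸ Sym2.mem_mk_left _ _) (hkept_of h₂ ▸ hw_notMem)
    · obtain ⟨x₁, y₁, rfl, -, hyx₁, hnyx₁, hΦ₁⟩ := hΦlost he₁ h₁
      obtain ⟨x₂, y₂, rfl, -, hyx₂, hnyx₂, hΦ₂⟩ := hΦlost he₂ h₂
      rw [hΦ₁, hΦ₂, Sym2.eq_iff] at heq
      obtain ⟨-, hy⟩ | ⟨hy, -⟩ := heq
      · obtain rfl := hι hy
        rw [hmatch y₁ x₁ x₂ hyx₁ hnyx₁ hyx₂ hnyx₂]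
      · exact absurd hy.symm (hw y₂)

end Reroute

lemma ZMod.val_add_cases {n : ℕ} [NeZero n] (a b : ZMod n) :
    (a + b).val = a.val + b.val ∨ (a + b).val + n = a.val + b.val := by
  by_cases h : a.val + b.val < n
  · exact .inl (ZMod.val_add_of_lt h)
  · exact .inr (ZMod.val_add_val_of_le (not_lt.mp h)).symm

lemma ZMod.val_sub_cases {n : ℕ} [NeZero n] (a b : ZMod n) :
    (a - b).val + b.val = a.val ∨ (a - b).val + b.val = a.val + n := by
  have := ZMod.val_add_cases (a - b) b
  rw [sub_add_cancel] at this
  omega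

lemma cyclePow_adj_iff {n d : ℕ} [NeZero n] {u v : ZMod n} :
    (cyclePow n d).Adj u v ↔ 0 < (v - u).val ∧ ((v - u).val ≤ d ∨ n ≤ (v - u).val + d) := by
  have hpos : 0 < (v - u).val ↔ u ≠ v := by
    rw [Nat.pos_iff_ne_zero, ne_eq, ZMod.val_eq_zero, sub_eq_zero, eq_comm]
  have hlt := (v - u).val_lt
  change u ≠ v ∧ _ ↔ _
  rw [← hpos]
  refine and_congr_right fun huv => ⟨?_, ?_⟩
  · rintro ⟨j, -, hjd, h | h⟩
    all_goals have hj : (j : ZMod n).val ≤ j := (ZMod.val_natCast n j).trans_le (Nat.mod_le j n)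
    · left
      rw [h, add_sub_cancel_left]
      omega
    · have hsum := ZMod.val_add_cases (v - u) (j : ZMod n)
      rw [show v - u + j = 0 by rw [h]; abel, ZMod.val_zero] at hsum
      omega
  · rintro (h | h)
    · exact ⟨(v - u).val, huv, h, .inl (by rw [ZMod.natCast_zmod_val]; abel)⟩
    · refine ⟨n - (v - u).val, by omega, by omega, .inr ?_⟩
      rw [Nat.cast_sub hlt.le, ZMod.natCast_self, ZMod.natCast_zmod_val]
      abel

section CycleSkip

variable {m d : ℕ} [NeZero m]

def cycleSkip (u : ZMod (m + 1)) (x : ZMod m) : ZMod (m + 1) :=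
  u + ((x.val + 1 : ℕ) : ZMod (m + 1))

lemma val_cycleSkip_sub (u : ZMod (m + 1)) (x : ZMod m) :
    (cycleSkip u x - u).val = x.val + 1 := by
  rw [cycleSkip, add_sub_cancel_left, ZMod.val_natCast_of_lt (by have := x.val_lt; omega)]

lemma cycleSkip_injective (u : ZMod (m + 1)) : Injective (cycleSkip (m := m) u) := by
  intro x y h
  have := congrArg (fun v => (v - u).val) h
  simp only [val_cycleSkip_sub, add_left_inj] at this
  exact ZMod.val_injective m this

lemma cycleSkip_ne (u : ZMod (m + 1)) (x : ZMod m) : cycleSkip u x ≠ u := fun h => by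
  simpa [h] using val_cycleSkip_sub u x

lemma range_cycleSkip (u : ZMod (m + 1)) : Set.range (cycleSkip (m := m) u) = {u}ᶜ := by
  refine Set.ext fun v => ⟨?_, fun hv => ?_⟩
  · rintro ⟨x, rfl⟩
    exact cycleSkip_ne u x
  · have hpos : 0 < (v - u).val := by
      rw [Nat.pos_iff_ne_zero, ne_eq, ZMod.val_eq_zero, sub_eq_zero]
      exact hv
    refine ⟨(((v - u).val - 1 : ℕ) : ZMod m), ?_⟩
    rw [cycleSkip, ZMod.val_natCast_of_lt (by have := (v - u).val_lt; omega),
      Nat.sub_add_cancel hpos, ZMod.natCast_zmod_val, add_sub_cancel]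

lemma val_cycleSkip_sub_cycleSkip_cases (u : ZMod (m + 1)) (x y : ZMod m) :
    (cycleSkip u y - cycleSkip u x).val + x.val = y.val ∨
      (cycleSkip u y - cycleSkip u x).val + x.val = y.val + (m + 1) := by
  have := ZMod.val_sub_cases (cycleSkip u y - u) (cycleSkip u x - u)
  rw [sub_sub_sub_cancel_right, val_cycleSkip_sub, val_cycleSkip_sub] at this
  omega

lemma val_add_eq_of_cyclePow_lost {u : ZMod (m + 1)} {x y : ZMod m}
    (hxy : (cyclePow m d).Adj x y)
    (hlost : ¬ (cyclePow (m + 1) d).Adj (cycleSkip u x) (cycleSkip u y)) :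
    x.val + d = y.val + m ∨ y.val + d = x.val + m := by
  rw [cyclePow_adj_iff] at hxy hlost
  have := ZMod.val_sub_cases y x
  have := val_cycleSkip_sub_cycleSkip_cases u x y
  have := x.val_lt
  have := y.val_lt
  have := (y - x).val_lt
  omega

lemma cyclePow_adj_of_lost {u : ZMod (m + 1)} {x y : ZMod m}
    (hxy : (cyclePow m d).Adj x y)
    (hlost : ¬ (cyclePow (m + 1) d).Adj (cycleSkip u x) (cycleSkip u y)) :
    (cyclePow (m + 1) d).Adj u (cycleSkip u x) := by
  have := val_add_eq_of_cyclePow_lost hxy hlost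
  have := y.val_lt
  rw [cyclePow_adj_iff, val_cycleSkip_sub]
  omega

lemma eq_of_cyclePow_lost (hm : 2 * d + 1 ≤ m) {u : ZMod (m + 1)} {x y y' : ZMod m}
    (hxy : (cyclePow m d).Adj x y)
    (hlost : ¬ (cyclePow (m + 1) d).Adj (cycleSkip u x) (cycleSkip u y))
    (hxy' : (cyclePow m d).Adj x y')
    (hlost' : ¬ (cyclePow (m + 1) d).Adj (cycleSkip u x) (cycleSkip u y')) : y = y' := by
  have hy := val_add_eq_of_cyclePow_lost hxy hlost
  have hy' := val_add_eq_of_cyclePow_lost hxy' hlost'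
  have := y.val_lt
  have := y'.val_lt
  exact ZMod.val_injective m (by omega)

end CycleSkip

lemma rna_cyclePow_le_rna_succ {m d : ℕ} (hm : 2 * d + 1 ≤ m) :
    rna (cyclePow m d) ≤ rna (cyclePow (m + 1) d) := by
  have : NeZero m := ⟨by omega⟩
  refine rna_le_rna_of_forall_balanced fun f hf => ?_
  obtain ⟨u, hu⟩ := exists_majority_vertex f
  exact ⟨f ∘ cycleSkip u, hf.comp_of_majority (cycleSkip_injective u) (range_cycleSkip u) hu,
    mixedCount_comp_le_of_reroute (cycleSkip_injective u) (cycleSkip_ne u)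
      (fun _ _ => cyclePow_adj_of_lost) (fun _ _ _ => eq_of_cyclePow_lost hm) f⟩

theorem stmt8_general (d n : ℕ) (hn : 2 * d + 1 < n)
    (h : d * (d + 1) ≤ rna (cyclePow (n - 1) d)) :
    d * (d + 1) ≤ rna (cyclePow n d) := by
  obtain ⟨m, rfl⟩ : ∃ m, n = m + 1 := ⟨n - 1, by omega⟩
  rw [Nat.add_sub_cancel] at h
  exact h.trans (rna_cyclePow_le_rna_succ (by omega))

theorem stmt8 (d n : ℕ) (hd : 2 ≤ d) (hn : 2 * d + 1 < n)
    (h : d * (d + 1) ≤ rna (cyclePow (n - 1) d)) :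
    d * (d + 1) ≤ rna (cyclePow n d) :=
  stmt8_general d n hn h
end
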